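/- arXiv:math/0607614 — 3 statements merged into one kernel-verified Lean document; each statement's English description precedes it below -/
import Mathlib

section
/- For any nonzero complex number a and any additive subgroup G of ℂ, the generalized Virasoro algebras Vir[G] and Vir[aG] are isomorphic as Lie algebras. -/
open Finsupp

/-- Bracket on basis elements of the generalized Virasoro algebra `Vir[G]`:
`none` is the central element `C`, `some x` is `d_x`. -/
noncomputable def virBasisBr (G : AddSubgroup ℂ) : Option ↥G → Option ↥G → (Option ↥G →₀ ℂ)
  | Option.some x, Option.some y =>
      ((y : ℂ) - (x : ℂ)) • Finsupp.single (some (x + y)) (1 : ℂ) +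
        (if (x : ℂ) = -(y : ℂ) then (((x : ℂ) ^ 3 - (x : ℂ)) / 12) • Finsupp.single (none : Option ↥G) (1 : ℂ) else 0)
  | _, _ => 0

/-- The bracket on the free vector space with basis `{C} ∪ {d_x : x ∈ G}`. -/
noncomputable def virBr (G : AddSubgroup ℂ) (u v : Option ↥G →₀ ℂ) : Option ↥G →₀ ℂ :=
  u.sum fun i a => v.sum fun j c => (a * c) • virBasisBr G i j

/-! Rescaling `d_x ↦ a⁻¹ d_{ax}`, `C ↦ a C` respects the `d`-components of all brackets, and the
central terms then differ only by a coboundary, which a multiple of `C` added to the image of `d₀`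
cancels. Both the map and the brackets are determined by their values on basis vectors, so the
bracket relation only has to be checked on pairs of basis vectors. -/

namespace Finsupp

variable {R ι κ M N₁ N₂ P : Type*} [CommSemiring R] [AddCommMonoid M] [Module R M]
  [AddCommMonoid N₁] [Module R N₁] [AddCommMonoid N₂] [Module R N₂] [AddCommMonoid P] [Module R P]

variable (R) in
noncomputable def linearCombination₂ (b : ι → κ → M) :
    (ι →₀ R) →ₗ[R] (κ →₀ R) →ₗ[R] M :=
  linearCombination R fun i => linearCombination R (b i)

theorem linearCombination₂_apply (b : ι → κ → M) (u : ι →₀ R) (v : κ →₀ R) :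
    linearCombination₂ R b u v = u.sum fun i a => v.sum fun j c => (a * c) • b i j := by
  simp only [linearCombination₂, linearCombination_apply, LinearMap.finsupp_sum_apply,
    LinearMap.smul_apply, smul_sum, smul_smul]

@[simp] theorem linearCombination₂_single (b : ι → κ → M) (i : ι) (j : κ) (a c : R) :
    linearCombination₂ R b (single i a) (single j c) = (a * c) • b i j := by
  simp [linearCombination₂, smul_smul]

theorem apply_linearCombination₂ (b : ι → κ → M) (F : M →ₗ[R] P) (B : N₁ →ₗ[R] N₂ →ₗ[R] P)
    {f : ι → N₁} {g : κ → N₂} (h : ∀ i j, F (b i j) = B (f i) (g j)) (u : ι →₀ R) (v : κ →₀ R) :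
    F (linearCombination₂ R b u v) = B (linearCombination R f u) (linearCombination R g v) := by
  have hB : (linearCombination₂ R b).compr₂ F =
      B.compl₁₂ (linearCombination R f) (linearCombination R g) :=
    LinearMap.ext_basis Finsupp.basisSingleOne Finsupp.basisSingleOne fun i j => by simpa using h i j
  exact LinearMap.congr_fun₂ hB u v

theorem linearCombination_comp_linearCombination_eq_id {f : ι → κ →₀ R} {g : κ → ι →₀ R}
    (h : ∀ i, linearCombination R g (f i) = single i 1) :
    linearCombination R g ∘ₗ linearCombination R f = LinearMap.id :=
  lhom_ext fun i c => by simp [h]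

end Finsupp

namespace AddSubgroup

variable {R : Type*} [Ring R] [NoZeroDivisors R] (G : AddSubgroup R) {a : R} (ha : a ≠ 0)

noncomputable def equivMapMulLeft : ↥G ≃+ ↥(G.map (AddMonoidHom.mulLeft a)) :=
  G.equivMapOfInjective (AddMonoidHom.mulLeft a) (mul_right_injective₀ ha)

@[simp] theorem coe_equivMapMulLeft (x : ↥G) : (G.equivMapMulLeft ha x : R) = a * x := rfl

end AddSubgroup

theorem virBr_eq_linearCombination₂ (G : AddSubgroup ℂ) (u v : Option ↥G →₀ ℂ) :
    virBr G u v = linearCombination₂ ℂ (virBasisBr G) u v :=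
  (linearCombination₂_apply _ u v).symm

section Rescaling

variable (G : AddSubgroup ℂ) {a : ℂ}

@[simp] theorem virBasisBr_none_left (j : Option ↥G) : virBasisBr G none j = 0 := by
  cases j <;> rfl

@[simp] theorem virBasisBr_none_right (i : Option ↥G) : virBasisBr G i none = 0 := by
  cases i <;> rfl

@[simp] theorem linearCombination₂_virBasisBr_single_none_left (c : ℂ) (v : Option ↥G →₀ ℂ) :
    linearCombination₂ ℂ (virBasisBr G) (single none c) v = 0 := by
  simp [linearCombination₂_apply]

@[simp] theorem linearCombination₂_virBasisBr_single_none_right (c : ℂ) (u : Option ↥G →₀ ℂ) :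
    linearCombination₂ ℂ (virBasisBr G) u (single none c) = 0 := by
  simp [linearCombination₂_apply]

theorem virBasisBr_some_some (x y : ↥G) :
    virBasisBr G (some x) (some y) =
      ((y : ℂ) - x) • single (some (x + y)) 1 +
        if (x : ℂ) = -y then ((x ^ 3 - x : ℂ) / 12) • single none 1 else 0 := rfl

/-- Pulled back along `d_x ↦ a⁻¹ d_{ax}`, `C ↦ a C`, the cocycle of `Vir[aG]` becomes
`a⁻² ((a x)³ - a x) / 12 = a (x³ - x) / 12 - 2 x · virShift a`; the coboundary term is absorbed by
adding `virShift a · C` to the image of `d₀`. -/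
noncomputable def virShift (a : ℂ) : ℂ := (1 - a ^ 2) / (24 * a)

variable (ha : a ≠ 0)

noncomputable def rescaleBasis : Option ↥G → Option ↥(G.map (AddMonoidHom.mulLeft a)) →₀ ℂ
  | Option.none => a • single none 1
  | Option.some x => a⁻¹ • single (some (G.equivMapMulLeft ha x)) 1 +
      (if x = 0 then virShift a else 0) • single none 1

noncomputable def rescaleInvBasis : Option ↥(G.map (AddMonoidHom.mulLeft a)) → Option ↥G →₀ ℂ
  | Option.none => a⁻¹ • single none 1
  | Option.some y => a • single (some ((G.equivMapMulLeft ha).symm y)) 1 -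
      (if y = 0 then virShift a else 0) • single none 1

theorem linearCombination_rescaleInvBasis_rescaleBasis (i : Option ↥G) :
    linearCombination ℂ (rescaleInvBasis G ha) (rescaleBasis G ha i) = single i 1 := by
  rcases i with _ | x
  · simp [rescaleBasis, rescaleInvBasis, ha]
  · by_cases hx : x = 0
    · ext (_ | k) <;> simp [rescaleBasis, rescaleInvBasis, ha, hx, single_apply]; ring
    · simp [rescaleBasis, rescaleInvBasis, ha, hx]

theorem linearCombination_rescaleBasis_rescaleInvBasis
    (j : Option ↥(G.map (AddMonoidHom.mulLeft a))) :
    linearCombination ℂ (rescaleBasis G ha) (rescaleInvBasis G ha j) = single j 1 := by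
  rcases j with _ | y
  · simp [rescaleBasis, rescaleInvBasis, ha]
  · by_cases hy : y = 0
    · ext (_ | k) <;> simp [rescaleBasis, rescaleInvBasis, ha, hy, single_apply]; ring
    · simp [rescaleBasis, rescaleInvBasis, ha, hy]

noncomputable def rescaleEquiv :
    (Option ↥G →₀ ℂ) ≃ₗ[ℂ] (Option ↥(G.map (AddMonoidHom.mulLeft a)) →₀ ℂ) :=
  LinearEquiv.ofLinearMap (linearCombination ℂ (rescaleBasis G ha))
    (linearCombination ℂ (rescaleInvBasis G ha))
    (linearCombination_comp_linearCombination_eq_id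
      (linearCombination_rescaleBasis_rescaleInvBasis G ha))
    (linearCombination_comp_linearCombination_eq_id
      (linearCombination_rescaleInvBasis_rescaleBasis G ha))

theorem linearCombination_rescaleBasis_virBasisBr (i j : Option ↥G) :
    linearCombination ℂ (rescaleBasis G ha) (virBasisBr G i j) =
      linearCombination₂ ℂ (virBasisBr (G.map (AddMonoidHom.mulLeft a)))
        (rescaleBasis G ha i) (rescaleBasis G ha j) := by
  rcases i with _ | x
  · simp [rescaleBasis]
  rcases j with _ | y
  · simp [rescaleBasis]
  have hxy : x + y = 0 ↔ (x : ℂ) = -y := by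
    rw [← Subtype.coe_inj, AddSubgroup.coe_add, AddSubgroup.coe_zero, add_eq_zero_iff_eq_neg]
  have haxy : a * x = -(a * y) ↔ (x : ℂ) = -y := by rw [← mul_neg, mul_right_inj' ha]
  simp only [rescaleBasis, virBasisBr_some_some, map_add, map_smul, LinearMap.add_apply,
    LinearMap.smul_apply, linearCombination₂_single, virBasisBr_none_left, virBasisBr_none_right,
    smul_zero, add_zero, AddSubgroup.coe_equivMapMulLeft, haxy]
  by_cases h : (x : ℂ) = -y
  · rw [if_pos h, if_pos h]
    simp only [map_smul, linearCombination_single, rescaleBasis, if_pos (hxy.2 h),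
      ← map_add (G.equivMapMulLeft ha)]
    rw [h, virShift]
    match_scalars <;> field_simp; ring
  · rw [if_neg h, if_neg h]
    simp only [linearCombination_single, rescaleBasis, if_neg (mt hxy.1 h),
      ← map_add (G.equivMapMulLeft ha), zero_smul, map_zero, add_zero]
    match_scalars
    field_simp

end Rescaling

/-- for any nonzero `a : ℂ`, `Vir[G] ≅ Vir[aG]` as Lie algebras, i.e. there is a
linear equivalence of the underlying spaces intertwining the brackets. -/
theorem virasoro_iso_smul (G : AddSubgroup ℂ) (a : ℂ) (ha : a ≠ 0) :
    ∃ e : (Option ↥G →₀ ℂ) ≃ₗ[ℂ] (Option ↥(G.map (AddMonoidHom.mulLeft a)) →₀ ℂ),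
      ∀ u v : Option ↥G →₀ ℂ,
        e (virBr G u v) = virBr (G.map (AddMonoidHom.mulLeft a)) (e u) (e v) := by
  refine ⟨rescaleEquiv G ha, fun u v => ?_⟩
  simp only [virBr_eq_linearCombination₂]
  exact apply_linearCombination₂ _ _ _ (linearCombination_rescaleBasis_virBasisBr G ha) u v
end

section
/- Let G be a nonzero additive subgroup of ℂ and α, β ∈ ℂ. The intermediate series module V(α,β,G) over Vir[G] is reducible if and only if α ∈ G and β ∈ {0, 1}. -/
open Finsupp

/-- The action of `d_x` on the intermediate series module `V(α,β,G)` with basis `{v_y : y ∈ G}`: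
`d_x v_y = (α + y + xβ) v_{x+y}` (the central element `C` acts by `0`). -/
noncomputable def dActL (G : AddSubgroup ℂ) (α β : ℂ) (x : ↥G) : (↥G →₀ ℂ) →ₗ[ℂ] (↥G →₀ ℂ) :=
  Finsupp.lsum ℂ fun y : ↥G =>
    LinearMap.toSpanSingleton ℂ (↥G →₀ ℂ) ((α + (y : ℂ) + (x : ℂ) * β) • Finsupp.single (x + y) (1 : ℂ))

/-!
`d_0` acts diagonally on the basis `v_y` with pairwise distinct eigenvalues `α + y`, so every
submodule `S` is spanned by the `v_y` it contains, say for `y ∈ A`. For `y ∈ A` and `z ∉ A`,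
`d_{z-y} v_y = (α + y + (z - y)β) v_z` forces `α + y + (z - y)β = 0`. If `β ∉ {0, 1}` this
determines `y` from `z` and `z` from `y`, so `A` and its complement are singletons, which is
impossible in the infinite group `G`; for `β = 0` it gives `α = -y`, for `β = 1` it gives
`α = -z`. Conversely, for `α ∈ G` the span of `v_{-α}` (when `β = 0`) and the span of the `v_y`
with `y ≠ -α` (when `β = 1`) are proper nonzero submodules.
-/

theorem AddSubgroup.infinite_of_ne_bot {M : Type*} [AddGroup M] [IsAddTorsionFree M]
    {H : AddSubgroup M} (hH : H ≠ ⊥) : Infinite H := by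
  obtain ⟨g, hg⟩ := H.ne_bot_iff_exists_ne_zero.mp hH
  rw [← not_finite_iff_infinite]
  intro
  exact not_isOfFinAddOrder_of_isAddTorsionFree hg (isOfFinAddOrder_of_finite g)

namespace Finsupp

variable {ι R : Type*}

theorem exists_single_one_notMem_of_ne_top [Semiring R] {S : Submodule R (ι →₀ R)}
    (hS : S ≠ ⊤) : ∃ i, single i (1 : R) ∉ S := by
  by_contra! h
  refine hS (eq_top_iff.2 ?_)
  rw [← supported_univ, supported_eq_span_single, Submodule.span_le]
  rintro _ ⟨i, -, rfl⟩
  exact h i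

theorem supported_ne_bot [Semiring R] [Nontrivial R] {s : Set ι} (hs : s.Nonempty) :
    supported R R s ≠ ⊥ := by
  obtain ⟨i, hi⟩ := hs
  intro h
  have := single_mem_supported R (1 : R) hi
  rw [h, Submodule.mem_bot, single_eq_zero] at this
  exact one_ne_zero this

theorem supported_ne_top [Semiring R] [Nontrivial R] {s : Set ι} (hs : s ≠ Set.univ) :
    supported R R s ≠ ⊤ := by
  obtain ⟨i, hi⟩ := (Set.ne_univ_iff_exists_notMem s).1 hs
  intro h
  have := (mem_supported R (single i (1 : R))).1 (h ▸ Submodule.mem_top)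
  rw [support_single i one_ne_zero, Finset.coe_singleton, Set.singleton_subset_iff] at this
  exact hi this

/-- A submodule invariant under an operator that is diagonal in the standard basis, with pairwise
distinct eigenvalues, is spanned by the basis vectors it contains. -/
theorem single_one_mem_of_mem_support_of_diagonal [Field R] {T : (ι →₀ R) →ₗ[R] (ι →₀ R)}
    {μ : ι → R} (hμ : Function.Injective μ) (hT : ∀ f t, T f t = μ t * f t)
    {S : Submodule R (ι →₀ R)} (hS : ∀ v ∈ S, T v ∈ S) {f : ι →₀ R} (hf : f ∈ S) {y : ι}
    (hy : y ∈ f.support) : single y 1 ∈ S := by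
  classical
  induction hn : f.support.card using Nat.strong_induction_on generalizing f with
  | _ n ih =>
  by_cases hsing : f.support = {y}
  · obtain ⟨hfy, hf_eq⟩ := support_eq_singleton.1 hsing
    have : single y (1 : R) = (f y)⁻¹ • f := by
      rw [hf_eq, smul_single, single_eq_same, smul_eq_mul, inv_mul_cancel₀ hfy]
    exact this ▸ S.smul_mem _ hf
  obtain ⟨y', hy', hy'y⟩ : ∃ y' ∈ f.support, y' ≠ y := by
    by_contra! h
    exact hsing (Finset.eq_singleton_iff_unique_mem.2 ⟨hy, h⟩)
  -- Applying `T - μ y'` kills the `y'`-coordinate and rescales the others by nonzero factors.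
  set g := T f - μ y' • f
  have hg : ∀ t, g t = (μ t - μ y') * f t := fun t => by
    simp only [g, sub_apply, smul_apply, hT, smul_eq_mul]; ring
  have hmem : ∀ {t}, t ≠ y' → (t ∈ g.support ↔ t ∈ f.support) := fun {t} ht => by
    simp [mem_support_iff, hg, sub_ne_zero.2 (hμ.ne ht)]
  have hsub : g.support ⊆ f.support.erase y' := fun t ht => by
    have hty : t ≠ y' := by rintro rfl; simp [mem_support_iff, hg] at ht
    exact Finset.mem_erase.2 ⟨hty, (hmem hty).1 ht⟩
  have hcard : g.support.card < n := hn ▸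
    (Finset.card_le_card hsub).trans_lt (Finset.card_erase_lt_of_mem hy')
  exact ih _ hcard (S.sub_mem (hS f hf) (S.smul_mem _ hf)) ((hmem hy'y.symm).2 hy) rfl

end Finsupp

theorem eq_zero_or_eq_one_of_forall_mem_notMem {K : Type*} [Field K] {G : AddSubgroup K}
    [Infinite G] {A : Set G} {a b : K} (hA : A.Nonempty) (hAc : Aᶜ.Nonempty)
    (h : ∀ y ∈ A, ∀ z ∉ A, a + y + (z - y) * b = 0) : b = 0 ∨ b = 1 := by
  by_contra! hb
  obtain ⟨y₀, hy₀⟩ := hA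
  obtain ⟨z₀, hz₀⟩ := hAc
  have hA1 : A.Subsingleton := fun y₁ h₁ y₂ h₂ => Subtype.ext <| by
    have : ((y₁ : K) - y₂) * (1 - b) = 0 := by
      linear_combination h y₁ h₁ z₀ hz₀ - h y₂ h₂ z₀ hz₀
    exact sub_eq_zero.1 ((mul_eq_zero.1 this).resolve_right (sub_ne_zero.2 hb.2.symm))
  have hAc1 : Aᶜ.Subsingleton := fun z₁ h₁ z₂ h₂ => Subtype.ext <| by
    have : ((z₁ : K) - z₂) * b = 0 := by
      linear_combination h y₀ hy₀ z₁ h₁ - h y₀ hy₀ z₂ h₂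
    exact sub_eq_zero.1 ((mul_eq_zero.1 this).resolve_right hb.1)
  exact Set.infinite_univ (Set.union_compl_self A ▸ hA1.finite.union hAc1.finite)

section IntermediateSeries

variable {G : AddSubgroup ℂ} {α β : ℂ}

theorem dActL_single (x y : G) (c : ℂ) :
    dActL G α β x (single y c) = single (x + y) ((α + y + x * β) * c) := by
  rw [dActL, lsum_single, LinearMap.toSpanSingleton_apply, smul_smul, smul_single_one, mul_comm]

theorem dActL_apply (x : G) (f : G →₀ ℂ) (t : G) :
    dActL G α β x f t = (α + ↑(t - x) + x * β) * f (t - x) := by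
  induction f using Finsupp.induction_linear with
  | zero => simp
  | add f g hf hg => simp [hf, hg, mul_add]
  | single y c =>
    rw [dActL_single]
    by_cases hy : y = t - x
    · subst hy
      simp
    · have : x + y ≠ t := fun h => hy (eq_sub_of_add_eq' h)
      simp [this, hy]

/-- The central element acts by zero, so the `Vir[G]`-submodules of `V(α,β,G)` are the subspaces
stable under every `d_x`. -/
def IsVirSubmodule (G : AddSubgroup ℂ) (α β : ℂ) (S : Submodule ℂ (G →₀ ℂ)) : Prop :=
  ∀ x : G, ∀ v ∈ S, dActL G α β x v ∈ S

namespace IsVirSubmodule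

variable {S : Submodule ℂ (G →₀ ℂ)}

-- `d_0` acts diagonally with the pairwise distinct eigenvalues `α + t`.
theorem single_one_mem (hS : IsVirSubmodule G α β S) {f : G →₀ ℂ} (hf : f ∈ S) {y : G}
    (hy : y ∈ f.support) : single y 1 ∈ S :=
  single_one_mem_of_mem_support_of_diagonal ((add_right_injective α).comp Subtype.val_injective)
    (fun f t => by simp [dActL_apply]) (hS 0) hf hy

theorem exists_single_one_mem (hS : IsVirSubmodule G α β S) (hbot : S ≠ ⊥) :
    ∃ y, single y 1 ∈ S := by
  obtain ⟨f, hf, hf0⟩ := (Submodule.ne_bot_iff S).1 hbot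
  obtain ⟨y, hy⟩ := support_nonempty_iff.2 hf0
  exact ⟨y, hS.single_one_mem hf hy⟩

theorem coeff_eq_zero (hS : IsVirSubmodule G α β S) {y z : G} (hy : single y 1 ∈ S)
    (hz : single z 1 ∉ S) : α + y + (z - y) * β = 0 := by
  by_contra h
  have := S.smul_mem (α + y + (z - y) * β)⁻¹ (hS (z - y) _ hy)
  rw [dActL_single, sub_add_cancel, smul_single, smul_eq_mul, mul_one, AddSubgroup.coe_sub,
    inv_mul_cancel₀ h] at this
  exact hz this

end IsVirSubmodule

theorem isVirSubmodule_supported {A : Set G}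
    (hA : ∀ y ∈ A, ∀ x, x + y ∉ A → α + y + x * β = 0) :
    IsVirSubmodule G α β (supported ℂ ℂ A) := by
  intro x v hv
  rw [mem_supported'] at hv ⊢
  intro t ht
  rw [dActL_apply]
  by_cases h : t - x ∈ A
  · rw [hA _ h x (by rwa [add_sub_cancel]), zero_mul]
  · rw [hv _ h, mul_zero]

end IntermediateSeries

/-- `V(α,β,G)` is reducible iff `α ∈ G` and `β ∈ {0,1}`. -/
theorem intermediate_series_reducible_iff (G : AddSubgroup ℂ) (hG : G ≠ ⊥) (α β : ℂ) :
    (∃ S : Submodule ℂ (↥G →₀ ℂ),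
        (∀ x : ↥G, ∀ v ∈ S, dActL G α β x v ∈ S) ∧ S ≠ ⊥ ∧ S ≠ ⊤) ↔
      (α ∈ G ∧ (β = 0 ∨ β = 1)) := by
  have := AddSubgroup.infinite_of_ne_bot hG
  constructor
  · rintro ⟨S, hS, hbot, htop⟩
    have hS : IsVirSubmodule G α β S := hS
    obtain ⟨y, hy⟩ := hS.exists_single_one_mem hbot
    obtain ⟨z, hz⟩ := exists_single_one_notMem_of_ne_top htop
    have key := hS.coeff_eq_zero hy hz
    have hβ := eq_zero_or_eq_one_of_forall_mem_notMem (A := {y | single y 1 ∈ S}) ⟨y, hy⟩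
      ⟨z, hz⟩ fun _ hy _ hz => hS.coeff_eq_zero hy hz
    refine ⟨?_, hβ⟩
    rcases hβ with rfl | rfl
    · exact (show α = -y by linear_combination key) ▸ neg_mem y.2
    · exact (show α = -z by linear_combination key) ▸ neg_mem z.2
  · rintro ⟨hα, hβ⟩
    set a : G := ⟨-α, neg_mem hα⟩
    have ha : α + a = 0 := add_neg_cancel α
    rcases hβ with rfl | rfl
    · refine ⟨supported ℂ ℂ {a}, isVirSubmodule_supported fun y hy _ _ => ?_,
        supported_ne_bot (Set.singleton_nonempty a), supported_ne_top (Set.singleton_ne_univ a)⟩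
      rw [Set.mem_singleton_iff.1 hy, mul_zero, add_zero, ha]
    · refine ⟨supported ℂ ℂ {a}ᶜ, isVirSubmodule_supported fun y _ x hxy => ?_,
        supported_ne_bot (Set.nonempty_compl.2 (Set.singleton_ne_univ a)),
        supported_ne_top (Set.compl_ne_univ.2 (Set.singleton_nonempty a))⟩
      rw [Set.notMem_compl_iff, Set.mem_singleton_iff] at hxy
      rw [← ha, ← hxy, AddSubgroup.coe_add]
      ring
end

section
/- Let G be a nonzero additive subgroup of ℂ and fix a total order ⪰ on G compatible with addition. Then Vir[G]⁺ = span{d_x : x ≻ 0} and Vir[G]⁻ = span{d_x : x ≺ 0} are Lie subalgebras of Vir[G], and Vir[G] = Vir[G]⁻ ⊕ (ℂd₀ ⊕ ℂC) ⊕ Vir[G]⁺ as vector spaces. -/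
open Finsupp

/-!
In the basis `{C} ∪ {d_x}`, each of the three subspaces consists of the vectors supported on a
set of indices, `{d_x : x ≺ 0}`, `{d_0, C}` and `{d_x : x ≻ 0}`, and by trichotomy these sets
partition the basis. Since `[d_x, d_y]` is a multiple of `d_{x+y}` unless `x + y = 0`, a set of
indices closed under addition and missing `0` spans a subalgebra; the positive and the negative
cone of an ordered group are such sets.
-/

section

variable {G : AddSubgroup ℂ}

lemma span_single_some_eq_supported (P : ↥G → Prop) :
    Submodule.span ℂ {f : Option ↥G →₀ ℂ | ∃ x : ↥G, P x ∧ f = single (some x) (1 : ℂ)} =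
      supported ℂ ℂ (some '' {x : ↥G | P x}) := by
  rw [supported_eq_span_single, Set.image_image]
  congr 1
  ext f
  simp [eq_comm]

lemma span_pair_eq_supported :
    Submodule.span ℂ
        ({single (some (0 : ↥G)) (1 : ℂ), single (none : Option ↥G) (1 : ℂ)} :
          Set (Option ↥G →₀ ℂ)) =
      supported ℂ ℂ ({some (0 : ↥G), none} : Set (Option ↥G)) := by
  rw [supported_eq_span_single, Set.image_pair]

lemma virBr_mem_supported {S : Set (Option ↥G)}
    (hS : ∀ i ∈ S, ∀ j ∈ S, virBasisBr G i j ∈ supported ℂ ℂ S)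
    {u v : Option ↥G →₀ ℂ} (hu : u ∈ supported ℂ ℂ S) (hv : v ∈ supported ℂ ℂ S) :
    virBr G u v ∈ supported ℂ ℂ S := by
  rw [mem_supported] at hu hv
  exact Submodule.sum_mem _ fun i hi => Submodule.sum_mem _ fun j hj =>
    Submodule.smul_mem _ _ (hS i (hu hi) j (hv hj))

lemma virBasisBr_some_some_of_add_ne_zero {x y : ↥G} (hxy : x + y ≠ 0) :
    virBasisBr G (some x) (some y) = ((y : ℂ) - x) • single (some (x + y)) (1 : ℂ) := by
  have hne : (x : ℂ) ≠ -(y : ℂ) := fun h =>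
    hxy (Subtype.ext (by rw [AddSubgroup.coe_add, h, neg_add_cancel, ZeroMemClass.coe_zero]))
  simp only [virBasisBr, if_neg hne, add_zero]

lemma virBr_mem_span_of_add_mem (P : ↥G → Prop) (hadd : ∀ x y, P x → P y → P (x + y))
    (hzero : ¬ P 0) :
    ∀ u ∈ Submodule.span ℂ {f : Option ↥G →₀ ℂ | ∃ x : ↥G, P x ∧ f = single (some x) (1 : ℂ)},
      ∀ v ∈ Submodule.span ℂ {f : Option ↥G →₀ ℂ | ∃ x : ↥G, P x ∧ f = single (some x) (1 : ℂ)},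
        virBr G u v ∈
          Submodule.span ℂ {f : Option ↥G →₀ ℂ | ∃ x : ↥G, P x ∧ f = single (some x) (1 : ℂ)} := by
  simp only [span_single_some_eq_supported]
  intro u hu v hv
  refine virBr_mem_supported ?_ hu hv
  rintro _ ⟨x, hx, rfl⟩ _ ⟨y, hy, rfl⟩
  have hxy := hadd x y hx hy
  rw [virBasisBr_some_some_of_add_ne_zero (ne_of_apply_ne P fun h => hzero (h ▸ hxy))]
  exact Submodule.smul_mem _ _ (single_mem_supported ℂ _ ⟨x + y, hxy, rfl⟩)

end

theorem virasoro_triangular_decomposition_general (G : AddSubgroup ℂ)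
    [LinearOrder ↥G] (hcompat : ∀ x y z : ↥G, x ≤ y → x + z ≤ y + z) :
    (∀ u ∈ Submodule.span ℂ
        {f : Option ↥G →₀ ℂ | ∃ x : ↥G, 0 < x ∧ f = Finsupp.single (some x) (1 : ℂ)},
      ∀ v ∈ Submodule.span ℂ
        {f : Option ↥G →₀ ℂ | ∃ x : ↥G, 0 < x ∧ f = Finsupp.single (some x) (1 : ℂ)},
      virBr G u v ∈ Submodule.span ℂ
        {f : Option ↥G →₀ ℂ | ∃ x : ↥G, 0 < x ∧ f = Finsupp.single (some x) (1 : ℂ)}) ∧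
    (∀ u ∈ Submodule.span ℂ
        {f : Option ↥G →₀ ℂ | ∃ x : ↥G, x < 0 ∧ f = Finsupp.single (some x) (1 : ℂ)},
      ∀ v ∈ Submodule.span ℂ
        {f : Option ↥G →₀ ℂ | ∃ x : ↥G, x < 0 ∧ f = Finsupp.single (some x) (1 : ℂ)},
      virBr G u v ∈ Submodule.span ℂ
        {f : Option ↥G →₀ ℂ | ∃ x : ↥G, x < 0 ∧ f = Finsupp.single (some x) (1 : ℂ)}) ∧
    Disjoint
      (Submodule.span ℂ
        {f : Option ↥G →₀ ℂ | ∃ x : ↥G, x < 0 ∧ f = Finsupp.single (some x) (1 : ℂ)})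
      (Submodule.span ℂ
        ({Finsupp.single (some (0 : ↥G)) (1 : ℂ), Finsupp.single (none : Option ↥G) (1 : ℂ)} :
          Set (Option ↥G →₀ ℂ)) ⊔
        Submodule.span ℂ
        {f : Option ↥G →₀ ℂ | ∃ x : ↥G, 0 < x ∧ f = Finsupp.single (some x) (1 : ℂ)}) ∧
    Disjoint
      (Submodule.span ℂ
        ({Finsupp.single (some (0 : ↥G)) (1 : ℂ), Finsupp.single (none : Option ↥G) (1 : ℂ)} :
          Set (Option ↥G →₀ ℂ)))
      (Submodule.span ℂ
        {f : Option ↥G →₀ ℂ | ∃ x : ↥G, 0 < x ∧ f = Finsupp.single (some x) (1 : ℂ)}) ∧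
    (Submodule.span ℂ
        {f : Option ↥G →₀ ℂ | ∃ x : ↥G, x < 0 ∧ f = Finsupp.single (some x) (1 : ℂ)} ⊔
      Submodule.span ℂ
        ({Finsupp.single (some (0 : ↥G)) (1 : ℂ), Finsupp.single (none : Option ↥G) (1 : ℂ)} :
          Set (Option ↥G →₀ ℂ)) ⊔
      Submodule.span ℂ
        {f : Option ↥G →₀ ℂ | ∃ x : ↥G, 0 < x ∧ f = Finsupp.single (some x) (1 : ℂ)}) = ⊤ := by
  have : IsOrderedAddMonoid ↥G := { add_le_add_left := fun a b hab c => hcompat a b c hab }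
  refine ⟨virBr_mem_span_of_add_mem _ (fun _ _ => add_pos) (lt_irrefl 0),
    virBr_mem_span_of_add_mem _ (fun _ _ => add_neg) (lt_irrefl 0), ?_, ?_, ?_⟩
  all_goals
    simp only [span_single_some_eq_supported, span_pair_eq_supported, ← supported_union]
  · refine disjoint_supported_supported (Set.disjoint_left.2 ?_)
    rintro _ ⟨x, hx, rfl⟩
    simp [hx.ne, hx.le.not_gt]
  · refine disjoint_supported_supported (Set.disjoint_right.2 ?_)
    rintro _ ⟨x, hx, rfl⟩
    simp [hx.ne']
  · rw [eq_top_iff, ← supported_univ]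
    refine supported_mono fun i _ => ?_
    rcases i with _ | x
    · simp
    · rcases lt_trichotomy x 0 with hx | rfl | hx
      · simp [hx]
      · simp
      · simp [hx]

/-- for a total order on `G` compatible with addition, the spans of
`{d_x : x ≻ 0}` and `{d_x : x ≺ 0}` are Lie subalgebras, and `Vir[G]` is the vector space
direct sum of them with `ℂd₀ ⊕ ℂC`. -/
theorem virasoro_triangular_decomposition (G : AddSubgroup ℂ) (hG : G ≠ ⊥)
    [LinearOrder ↥G] (hcompat : ∀ x y z : ↥G, x ≤ y → x + z ≤ y + z) :
    (∀ u ∈ Submodule.span ℂ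
        {f : Option ↥G →₀ ℂ | ∃ x : ↥G, 0 < x ∧ f = Finsupp.single (some x) (1 : ℂ)},
      ∀ v ∈ Submodule.span ℂ
        {f : Option ↥G →₀ ℂ | ∃ x : ↥G, 0 < x ∧ f = Finsupp.single (some x) (1 : ℂ)},
      virBr G u v ∈ Submodule.span ℂ
        {f : Option ↥G →₀ ℂ | ∃ x : ↥G, 0 < x ∧ f = Finsupp.single (some x) (1 : ℂ)}) ∧
    (∀ u ∈ Submodule.span ℂ
        {f : Option ↥G →₀ ℂ | ∃ x : ↥G, x < 0 ∧ f = Finsupp.single (some x) (1 : ℂ)},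
      ∀ v ∈ Submodule.span ℂ
        {f : Option ↥G →₀ ℂ | ∃ x : ↥G, x < 0 ∧ f = Finsupp.single (some x) (1 : ℂ)},
      virBr G u v ∈ Submodule.span ℂ
        {f : Option ↥G →₀ ℂ | ∃ x : ↥G, x < 0 ∧ f = Finsupp.single (some x) (1 : ℂ)}) ∧
    Disjoint
      (Submodule.span ℂ
        {f : Option ↥G →₀ ℂ | ∃ x : ↥G, x < 0 ∧ f = Finsupp.single (some x) (1 : ℂ)})
      (Submodule.span ℂ
        ({Finsupp.single (some (0 : ↥G)) (1 : ℂ), Finsupp.single (none : Option ↥G) (1 : ℂ)} :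
          Set (Option ↥G →₀ ℂ)) ⊔
        Submodule.span ℂ
        {f : Option ↥G →₀ ℂ | ∃ x : ↥G, 0 < x ∧ f = Finsupp.single (some x) (1 : ℂ)}) ∧
    Disjoint
      (Submodule.span ℂ
        ({Finsupp.single (some (0 : ↥G)) (1 : ℂ), Finsupp.single (none : Option ↥G) (1 : ℂ)} :
          Set (Option ↥G →₀ ℂ)))
      (Submodule.span ℂ
        {f : Option ↥G →₀ ℂ | ∃ x : ↥G, 0 < x ∧ f = Finsupp.single (some x) (1 : ℂ)}) ∧
    (Submodule.span ℂ
        {f : Option ↥G →₀ ℂ | ∃ x : ↥G, x < 0 ∧ f = Finsupp.single (some x) (1 : ℂ)} ⊔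
      Submodule.span ℂ
        ({Finsupp.single (some (0 : ↥G)) (1 : ℂ), Finsupp.single (none : Option ↥G) (1 : ℂ)} :
          Set (Option ↥G →₀ ℂ)) ⊔
      Submodule.span ℂ
        {f : Option ↥G →₀ ℂ | ∃ x : ↥G, 0 < x ∧ f = Finsupp.single (some x) (1 : ℂ)}) = ⊤ :=
  virasoro_triangular_decomposition_general G hcompat
end
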